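/- Under the hypotheses of the main coresets theorem — X ∈ ℝ^{n×p} with XᵀX invertible, y ∈ ℝⁿ with y ≠ X β̂_OLS, X* with X*ᵀX invertible, ‖X − X*‖₂ ≤ ε′‖X‖₂, and 0 < ε′ ≤ (1/κ²(X)) · (1 + (κ²(X)+1)‖y‖ / (ε^{1/2} ‖y − X β̂_OLS‖))^{-1} for a given ε > 0 — the fitted values satisfy ‖X β̂_OLS − X β̃‖² ≤ ε ‖y − X β̂_OLS‖², where β̃ = (X*ᵀX)⁻¹X*ᵀy. -/

import Mathlib

/-!
Write `A = XᵀX`, `e = y - X β̂` and `ẽ = y - X β̃`. The sketched normal equations `X*ᵀ ẽ = 0` give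
`β̂ - β̃ = A⁻¹ (X - X*)ᵀ ẽ`, so with `c = ‖X‖₂ ‖A⁻¹‖₂ ‖X - X*‖₂ ≤ ε′ κ²(X)` the fitted values obey
`d := ‖X β̂ - X β̃‖ ≤ c ‖ẽ‖ ≤ c (‖e‖ + d)`. Since `‖e‖ ≤ (κ²(X) + 1) ‖y‖`, the bound on `ε′` forces
`c ≤ √ε / (√ε + 1)`, and then `d ≤ c (‖e‖ + d)` rearranges to `d ≤ √ε ‖e‖`.
-/

open Matrix
open scoped Matrix.Norms.L2Operator

/-- Euclidean norm of a vector in `ℝⁿ`. -/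
noncomputable def vnorm {n : ℕ} (v : Fin n → ℝ) : ℝ := Real.sqrt (∑ i, v i ^ 2)

section Estimators

variable {m n R : Type*} [Fintype m] [Fintype n] [DecidableEq n] [CommRing R]

noncomputable def olsEstimator (X : Matrix m n R) (y : m → R) : n → R :=
  (Xᵀ * X)⁻¹ *ᵥ (Xᵀ *ᵥ y)

noncomputable def coreElementsEstimator (Xs X : Matrix m n R) (y : m → R) : n → R :=
  (Xsᵀ * X)⁻¹ *ᵥ (Xsᵀ *ᵥ y)

variable {X Xs : Matrix m n R} {y : m → R}

theorem transpose_mulVec_sub_mulVec_coreElementsEstimator (hXs : IsUnit (Xsᵀ * X).det) :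
    Xsᵀ *ᵥ (y - X *ᵥ coreElementsEstimator Xs X y) = 0 := by
  rw [coreElementsEstimator, mulVec_sub, mulVec_mulVec, mulVec_mulVec, mul_nonsing_inv _ hXs,
    one_mulVec, sub_self]

theorem olsEstimator_sub_eq {β : n → R} (hX : IsUnit (Xᵀ * X).det)
    (hβ : Xsᵀ *ᵥ (y - X *ᵥ β) = 0) :
    olsEstimator X y - β = (Xᵀ * X)⁻¹ *ᵥ ((X - Xs)ᵀ *ᵥ (y - X *ᵥ β)) := by
  rw [transpose_sub, sub_mulVec, hβ, sub_zero, mulVec_sub, mulVec_mulVec β, mulVec_sub,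
    mulVec_mulVec β, nonsing_inv_mul _ hX, one_mulVec, olsEstimator]

end Estimators

section Norms

variable {m n : ℕ}

theorem vnorm_eq_norm (v : Fin n → ℝ) : vnorm v = ‖WithLp.toLp 2 v‖ := by
  simp [vnorm, EuclideanSpace.norm_eq, Real.norm_eq_abs, sq_abs]

theorem vnorm_nonneg (v : Fin n → ℝ) : 0 ≤ vnorm v := Real.sqrt_nonneg _

theorem vnorm_pos {v : Fin n → ℝ} (hv : v ≠ 0) : 0 < vnorm v := by
  rw [vnorm_eq_norm, norm_pos_iff]
  exact fun h ↦ hv (congrArg WithLp.ofLp h)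

theorem vnorm_sub_le (u v : Fin n → ℝ) : vnorm (u - v) ≤ vnorm u + vnorm v := by
  simp only [vnorm_eq_norm, WithLp.toLp_sub]
  exact norm_sub_le _ _

theorem vnorm_sub_le_vnorm_sub_add_vnorm_sub (u v w : Fin n → ℝ) :
    vnorm (u - w) ≤ vnorm (u - v) + vnorm (v - w) := by
  simp only [vnorm_eq_norm, WithLp.toLp_sub]
  exact norm_sub_le_norm_sub_add_norm_sub _ _ _

theorem vnorm_mulVec_le (M : Matrix (Fin m) (Fin n) ℝ) (v : Fin n → ℝ) :
    vnorm (M *ᵥ v) ≤ ‖M‖ * vnorm v := by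
  rw [vnorm_eq_norm, vnorm_eq_norm]
  exact l2_opNorm_mulVec M (WithLp.toLp 2 v)

theorem l2_opNorm_transpose (M : Matrix (Fin m) (Fin n) ℝ) : ‖Mᵀ‖ = ‖M‖ := by
  rw [← conjTranspose_eq_transpose_of_trivial, l2_opNorm_conjTranspose]

end Norms

section LeastSquares

variable {n p : ℕ} {X Xs : Matrix (Fin n) (Fin p) ℝ} {y : Fin n → ℝ}

noncomputable def sqCondNumber (X : Matrix (Fin n) (Fin p) ℝ) : ℝ := ‖X‖ ^ 2 * ‖(Xᵀ * X)⁻¹‖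

theorem vnorm_mulVec_olsEstimator_le (X : Matrix (Fin n) (Fin p) ℝ) (y : Fin n → ℝ) :
    vnorm (X *ᵥ olsEstimator X y) ≤ sqCondNumber X * vnorm y :=
  calc vnorm (X *ᵥ olsEstimator X y)
      ≤ ‖X‖ * (‖(Xᵀ * X)⁻¹‖ * (‖Xᵀ‖ * vnorm y)) := by
        refine (vnorm_mulVec_le _ _).trans (mul_le_mul_of_nonneg_left ?_ (norm_nonneg _))
        refine (vnorm_mulVec_le _ _).trans (mul_le_mul_of_nonneg_left ?_ (norm_nonneg _))
        exact vnorm_mulVec_le _ _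
    _ = sqCondNumber X * vnorm y := by rw [l2_opNorm_transpose, sqCondNumber]; ring

theorem vnorm_sub_mulVec_olsEstimator_le (X : Matrix (Fin n) (Fin p) ℝ) (y : Fin n → ℝ) :
    vnorm (y - X *ᵥ olsEstimator X y) ≤ (sqCondNumber X + 1) * vnorm y := by
  linarith [vnorm_sub_le y (X *ᵥ olsEstimator X y), vnorm_mulVec_olsEstimator_le X y]

theorem sqCondNumber_nonneg (X : Matrix (Fin n) (Fin p) ℝ) : 0 ≤ sqCondNumber X := by
  unfold sqCondNumber; positivity

theorem norm_mul_norm_gram_inv_mul_norm_sub_le {ε' : ℝ} (hL : ‖X - Xs‖ ≤ ε' * ‖X‖) :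
    ‖X‖ * ‖(Xᵀ * X)⁻¹‖ * ‖X - Xs‖ ≤ ε' * sqCondNumber X :=
  calc ‖X‖ * ‖(Xᵀ * X)⁻¹‖ * ‖X - Xs‖ ≤ ‖X‖ * ‖(Xᵀ * X)⁻¹‖ * (ε' * ‖X‖) :=
        mul_le_mul_of_nonneg_left hL (by positivity)
    _ = ε' * sqCondNumber X := by rw [sqCondNumber]; ring

theorem vnorm_mulVec_olsEstimator_sub_le {β : Fin p → ℝ} (hX : IsUnit (Xᵀ * X).det)
    (hβ : Xsᵀ *ᵥ (y - X *ᵥ β) = 0) :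
    vnorm (X *ᵥ (olsEstimator X y - β)) ≤
      ‖X‖ * ‖(Xᵀ * X)⁻¹‖ * ‖X - Xs‖ * vnorm (y - X *ᵥ β) :=
  calc vnorm (X *ᵥ (olsEstimator X y - β))
      ≤ ‖X‖ * (‖(Xᵀ * X)⁻¹‖ * (‖(X - Xs)ᵀ‖ * vnorm (y - X *ᵥ β))) := by
        rw [olsEstimator_sub_eq hX hβ]
        refine (vnorm_mulVec_le _ _).trans (mul_le_mul_of_nonneg_left ?_ (norm_nonneg _))
        refine (vnorm_mulVec_le _ _).trans (mul_le_mul_of_nonneg_left ?_ (norm_nonneg _))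
        exact vnorm_mulVec_le _ _
    _ = ‖X‖ * ‖(Xᵀ * X)⁻¹‖ * ‖X - Xs‖ * vnorm (y - X *ᵥ β) := by
        rw [l2_opNorm_transpose]; ring

end LeastSquares

theorem mul_add_one_le_of_le_inv_one_add {c s t : ℝ} (hs : 0 < s) (ht : s⁻¹ ≤ t)
    (hc : c ≤ (1 + t)⁻¹) : c * (s + 1) ≤ s := by
  have : (1 + t)⁻¹ ≤ s / (s + 1) := by
    rw [← inv_div, add_div, div_self hs.ne', one_div]
    exact inv_anti₀ (by positivity) (by linarith)
  rw [← le_div_iff₀ (by positivity)]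
  exact hc.trans this

theorem mul_le_of_le_one_div_mul {a b u : ℝ} (hb : 0 ≤ b) (hu : 0 ≤ u) (h : a ≤ 1 / b * u) :
    a * b ≤ u :=
  calc a * b ≤ 1 / b * u * b := mul_le_mul_of_nonneg_right h hb
    _ = b * b⁻¹ * u := by ring
    _ ≤ u := mul_le_of_le_one_left hu mul_inv_le_one

theorem le_mul_of_le_mul_add {c d r s : ℝ} (hd : 0 ≤ d) (hr : 0 ≤ r) (hs : 0 ≤ s)
    (hc : c * (s + 1) ≤ s) (h : d ≤ c * (r + d)) : d ≤ s * r := by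
  nlinarith [mul_le_mul_of_nonneg_right h (by linarith : 0 ≤ s + 1),
    mul_le_mul_of_nonneg_right hc (by linarith : 0 ≤ r + d)]

theorem core_elements_fitted_values_bound_general
    (n p : ℕ)
    (X Xs : Matrix (Fin n) (Fin p) ℝ) (y : Fin n → ℝ) (ε ε' : ℝ)
    (hX : IsUnit (Xᵀ * X).det) (hXs : IsUnit (Xsᵀ * X).det)
    (βOLS : Fin p → ℝ) (hβOLS : βOLS = (Xᵀ * X)⁻¹ *ᵥ (Xᵀ *ᵥ y))
    (βt : Fin p → ℝ) (hβt : βt = (Xsᵀ * X)⁻¹ *ᵥ (Xsᵀ *ᵥ y))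
    (hy : y ≠ X *ᵥ βOLS) (hε : 0 < ε)
    (κ2 : ℝ) (hκ2 : κ2 = ‖X‖ ^ 2 * ‖(Xᵀ * X)⁻¹‖)
    (hL : ‖X - Xs‖ ≤ ε' * ‖X‖)
    (hε'le : ε' ≤ (1 / κ2) *
      (1 + (κ2 + 1) * vnorm y / (Real.sqrt ε * vnorm (y - X *ᵥ βOLS)))⁻¹) :
    vnorm (X *ᵥ βOLS - X *ᵥ βt) ^ 2 ≤ ε * vnorm (y - X *ᵥ βOLS) ^ 2 := by
  change βOLS = olsEstimator X y at hβOLS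
  change βt = coreElementsEstimator Xs X y at hβt
  change κ2 = sqCondNumber X at hκ2
  subst hβOLS hβt hκ2
  set r := vnorm (y - X *ᵥ olsEstimator X y)
  set d := vnorm (X *ᵥ olsEstimator X y - X *ᵥ coreElementsEstimator Xs X y)
  set c := ‖X‖ * ‖(Xᵀ * X)⁻¹‖ * ‖X - Xs‖
  have hr : 0 < r := vnorm_pos (sub_ne_zero.2 hy)
  have hs : 0 < √ε := Real.sqrt_pos.2 hε
  have hd : d ≤ c * (r + d) :=
    calc d = vnorm (X *ᵥ (olsEstimator X y - coreElementsEstimator Xs X y)) := by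
          rw [mulVec_sub]
      _ ≤ c * vnorm (y - X *ᵥ coreElementsEstimator Xs X y) :=
          vnorm_mulVec_olsEstimator_sub_le hX
            (transpose_mulVec_sub_mulVec_coreElementsEstimator hXs)
      _ ≤ c * (r + d) := mul_le_mul_of_nonneg_left
          (vnorm_sub_le_vnorm_sub_add_vnorm_sub _ _ _) (by positivity)
  have hc : c ≤ (1 + (sqCondNumber X + 1) * vnorm y / (√ε * r))⁻¹ :=
    (norm_mul_norm_gram_inv_mul_norm_sub_le hL).trans
      (mul_le_of_le_one_div_mul (sqCondNumber_nonneg X)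
        (by have := vnorm_nonneg y; have := sqCondNumber_nonneg X; positivity) hε'le)
  have ht : (√ε)⁻¹ ≤ (sqCondNumber X + 1) * vnorm y / (√ε * r) :=
    calc (√ε)⁻¹ = r / (√ε * r) := by field_simp
      _ ≤ _ := div_le_div_of_nonneg_right (vnorm_sub_mulVec_olsEstimator_le X y) (by positivity)
  have hdr := le_mul_of_le_mul_add (vnorm_nonneg _) hr.le hs.le
    (mul_add_one_le_of_le_inv_one_add hs ht hc) hd
  calc d ^ 2 ≤ (√ε * r) ^ 2 := pow_le_pow_left₀ (vnorm_nonneg _) hdr 2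
    _ = ε * r ^ 2 := by rw [mul_pow, Real.sq_sqrt hε.le]

/-- **Fitted-value deviation bound.** Under the hypotheses of the main
coresets theorem, the fitted values satisfy
`‖Xβ̂_OLS − Xβ̃‖² ≤ ε‖y − Xβ̂_OLS‖²`. -/
theorem core_elements_fitted_values_bound
    (n p : ℕ) (hp : 1 ≤ p) (hpn : p ≤ n)
    (X Xs : Matrix (Fin n) (Fin p) ℝ) (y : Fin n → ℝ) (ε ε' : ℝ)
    (hX : IsUnit (Xᵀ * X).det) (hXs : IsUnit (Xsᵀ * X).det)
    (βOLS : Fin p → ℝ) (hβOLS : βOLS = (Xᵀ * X)⁻¹ *ᵥ (Xᵀ *ᵥ y))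
    (βt : Fin p → ℝ) (hβt : βt = (Xsᵀ * X)⁻¹ *ᵥ (Xsᵀ *ᵥ y))
    (hy : y ≠ X *ᵥ βOLS) (hε : 0 < ε)
    (κ2 : ℝ) (hκ2 : κ2 = ‖X‖ ^ 2 * ‖(Xᵀ * X)⁻¹‖)
    (hL : ‖X - Xs‖ ≤ ε' * ‖X‖)
    (hε'pos : 0 < ε')
    (hε'le : ε' ≤ (1 / κ2) *
      (1 + (κ2 + 1) * vnorm y / (Real.sqrt ε * vnorm (y - X *ᵥ βOLS)))⁻¹) :
    vnorm (X *ᵥ βOLS - X *ᵥ βt) ^ 2 ≤ ε * vnorm (y - X *ᵥ βOLS) ^ 2 :=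
  core_elements_fitted_values_bound_general n p X Xs y ε ε' hX hXs βOLS hβOLS βt hβt hy hε κ2 hκ2 hL
    hε'le
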